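/- arXiv:2509.09885 — 3 statements merged into one kernel-verified Lean document; each statement's English description precedes it below -/
import Mathlib

section
/- Let N be a squarefree positive integer, let Σ = {(t, t²) : t ∈ ℤ/Nℤ} be the parabola in (ℤ/Nℤ)², and let k ∈ (ℤ/Nℤ)². Then the number of pairs (x', y') ∈ Σ × Σ with x' + y' = k is at most 2^{ω(N)}, where ω(N) is the number of distinct prime divisors of N. -/
/-!
If `(t, t²) + (u, u²) = (a, b)` then `u = a - t` and `t` is a root of `2X² - 2aX + (a² - b)`.
Modulo an odd prime this quadratic has at most two roots, and modulo `2` there are only two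
residues anyway. For squarefree `N`, reduction modulo the prime factors embeds `ZMod N` into
`∏_{p ∣ N} ZMod p` and respects the equation, so there are at most `2 ^ ω(N)` solutions.
-/

open scoped BigOperators

/-- Normalized Fourier transform on `(ℤ/Nℤ)²`:
`f̂(m) = N⁻¹ ∑ₓ f(x) e^{-2πi (x·m)/N}` where `x·m = x₁m₁ + x₂m₂`. -/
noncomputable def dft (N : ℕ) [NeZero N] (f : ZMod N × ZMod N → ℂ)
    (m : ZMod N × ZMod N) : ℂ :=
  (N : ℂ)⁻¹ * ∑ x : ZMod N × ZMod N,
    f x * Complex.exp (-2 * Real.pi * Complex.I *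
      (((x.1 * m.1 + x.2 * m.2).val : ℕ) : ℂ) / (N : ℂ))

/-- The parabola `Σ = {(t, t²) : t ∈ ℤ/Nℤ}` in `(ℤ/Nℤ)²`. -/
def parabola (N : ℕ) [NeZero N] : Finset (ZMod N × ZMod N) :=
  Finset.univ.image (fun t : ZMod N => (t, t ^ 2))

open Finset Polynomial

section ParabolaFiber

variable {R : Type*} [CommRing R] [Fintype R] [DecidableEq R]

/-- `t ∈ parabolaFiber a b` iff `(t, t²) + (a - t, (a - t)²) = (a, b)`: the representations of
`(a, b)` as a sum of two points of the parabola, indexed by the first coordinate of the first. -/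
def parabolaFiber (a b : R) : Finset R :=
  univ.filter fun t => t ^ 2 + (a - t) ^ 2 = b

theorem mem_parabolaFiber {a b t : R} : t ∈ parabolaFiber a b ↔ t ^ 2 + (a - t) ^ 2 = b := by
  simp [parabolaFiber]

theorem map_mem_parabolaFiber {S : Type*} [CommRing S] [Fintype S] [DecidableEq S]
    (f : R →+* S) {a b t : R} (ht : t ∈ parabolaFiber a b) :
    f t ∈ parabolaFiber (f a) (f b) := by
  rw [mem_parabolaFiber] at ht ⊢
  rw [← ht, map_add, map_pow, map_pow, map_sub]

theorem card_parabolaFiber_le_two_of_two_ne_zero [IsDomain R] (h2 : (2 : R) ≠ 0) (a b : R) :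
    #(parabolaFiber a b) ≤ 2 := by
  set q : R[X] := C 2 * X ^ 2 + C (-2 * a) * X + C (a ^ 2 - b)
  have hq : q.natDegree = 2 := natDegree_quadratic h2
  have hq0 : q ≠ 0 := by rintro h; simp [h] at hq
  refine hq ▸ card_le_degree_of_subset_roots fun t ht => ?_
  rw [mem_roots hq0, IsRoot]
  simp only [q, eval_add, eval_mul, eval_pow, eval_C, eval_X]
  linear_combination mem_parabolaFiber.mp (Finset.mem_def.mpr ht)

theorem card_parabolaFiber_le_pow_of_injective {ι : Type*} [Fintype ι] [DecidableEq ι]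
    {S : ι → Type*} [∀ i, CommRing (S i)] [∀ i, Fintype (S i)] [∀ i, DecidableEq (S i)]
    (φ : R →+* ∀ i, S i) (hφ : Function.Injective φ) {d : ℕ} (a b : R)
    (hd : ∀ i, #(parabolaFiber (φ a i) (φ b i)) ≤ d) :
    #(parabolaFiber a b) ≤ d ^ Fintype.card ι := by
  calc #(parabolaFiber a b)
      ≤ #(Fintype.piFinset fun i => parabolaFiber (φ a i) (φ b i)) := by
        refine card_le_card_of_injOn φ (fun t ht => ?_) hφ.injOn
        exact Fintype.mem_piFinset.mpr fun i =>
          map_mem_parabolaFiber ((Pi.evalRingHom S i).comp φ) ht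
    _ = ∏ i, #(parabolaFiber (φ a i) (φ b i)) := Fintype.card_piFinset _
    _ ≤ ∏ _i : ι, d := prod_le_prod' fun i _ => hd i
    _ = d ^ Fintype.card ι := by rw [prod_const, card_univ]

end ParabolaFiber

theorem ZMod.card_parabolaFiber_le_two {p : ℕ} [Fact p.Prime] (a b : ZMod p) :
    #(parabolaFiber a b) ≤ 2 := by
  rcases eq_or_ne p 2 with rfl | hp2
  · exact (card_le_univ _).trans (ZMod.card 2).le
  · have h2 : (2 : ZMod p) ≠ 0 := Ring.two_ne_zero (by rwa [ZMod.ringChar_zmod_n])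
    exact card_parabolaFiber_le_two_of_two_ne_zero h2 a b

instance Nat.fact_prime_of_primeFactors (n : ℕ) (p : n.primeFactors) : Fact (p : ℕ).Prime :=
  ⟨Nat.prime_of_mem_primeFactors p.2⟩

def ZMod.castHomPrimeFactors (N : ℕ) : ZMod N →+* ∀ p : N.primeFactors, ZMod p :=
  RingHom.pi fun p => ZMod.castHom (Nat.dvd_of_mem_primeFactors p.2) (ZMod p)

theorem ZMod.castHomPrimeFactors_injective {N : ℕ} [NeZero N] (hN : Squarefree N) :
    Function.Injective (ZMod.castHomPrimeFactors N) := by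
  refine (injective_iff_map_eq_zero _).mpr fun x hx => ?_
  have hdvd (p : ℕ) (hp : p ∈ N.primeFactors) : p ∣ x.val := by
    have := congrFun hx ⟨p, hp⟩
    rwa [castHomPrimeFactors, RingHom.pi_apply, ZMod.castHom_apply, ← ZMod.natCast_val,
      Pi.zero_apply, ZMod.natCast_eq_zero_iff] at this
  have hN_dvd : N ∣ x.val := by
    have := Finset.prod_primes_dvd _ (fun p hp => (Nat.prime_of_mem_primeFactors hp).prime) hdvd
    rwa [Nat.prod_primeFactors_of_squarefree hN] at this
  exact (ZMod.val_eq_zero x).mp (Nat.eq_zero_of_dvd_of_lt hN_dvd x.val_lt)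

theorem ZMod.card_parabolaFiber_le {N : ℕ} [NeZero N] (hN : Squarefree N) (a b : ZMod N) :
    #(parabolaFiber a b) ≤ 2 ^ #N.primeFactors := by
  simpa using card_parabolaFiber_le_pow_of_injective _ (castHomPrimeFactors_injective hN) a b
    fun p => ZMod.card_parabolaFiber_le_two _ _

theorem mem_parabola {N : ℕ} [NeZero N] {x : ZMod N × ZMod N} :
    x ∈ parabola N ↔ x.2 = x.1 ^ 2 := by
  constructor
  · rintro h
    obtain ⟨t, -, rfl⟩ := mem_image.mp h
    rfl
  · intro h
    exact mem_image.mpr ⟨x.1, mem_univ _, Prod.ext (by rfl) h.symm⟩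

theorem card_parabola_sum_eq (N : ℕ) [NeZero N] (k : ZMod N × ZMod N) :
    #(((parabola N) ×ˢ (parabola N)).filter (fun p => p.1 + p.2 = k)) =
      #(parabolaFiber k.1 k.2) := by
  refine card_nbij' (fun q => q.1.1) (fun t => ((t, t ^ 2), (k.1 - t, (k.1 - t) ^ 2)))
    ?_ ?_ ?_ ?_
  · rintro ⟨⟨t, t2⟩, ⟨u, u2⟩⟩ hq
    simp only [mem_coe, mem_filter, mem_product, mem_parabola] at hq
    obtain ⟨⟨rfl, rfl⟩, rfl⟩ := hq
    simp [mem_parabolaFiber]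
  · intro t ht
    rw [mem_coe, mem_parabolaFiber] at ht
    simp [mem_parabola, ht]
  · rintro ⟨⟨t, t2⟩, ⟨u, u2⟩⟩ hq
    simp only [mem_coe, mem_filter, mem_product, mem_parabola] at hq
    obtain ⟨⟨rfl, rfl⟩, rfl⟩ := hq
    simp
  · intro t _
    rfl

theorem parabola_sum_representations (N : ℕ) [NeZero N] (hN : Squarefree N)
    (k : ZMod N × ZMod N) :
    (((parabola N) ×ˢ (parabola N)).filter (fun p => p.1 + p.2 = k)).card ≤
      2 ^ N.primeFactors.card := by
  rw [card_parabola_sum_eq]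
  exact ZMod.card_parabolaFiber_le hN k.1 k.2
end

section
/- Let K be a positive integer and let N be a squarefree positive integer having at most K distinct prime divisors. Let Σ = {(t, t²) : t ∈ ℤ/Nℤ} be the parabola in (ℤ/Nℤ)². Then for every function f : (ℤ/Nℤ)² → ℂ, ( (1/|Σ|) · Σ_{m∈Σ} |f̂(m)|² )^{1/2} ≤ 2^{K/4} · N^{-1} · ( Σ_{x∈(ℤ/Nℤ)²} |f(x)|^{4/3} )^{3/4}. -/
open scoped BigOperators

/-!
Let `g` be the conjugate of the Fourier transform of `f` restricted to the parabola and `E` the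
extension operator from the parabola. Then `∑ |f̂|²` over the parabola is `⟨f, E g⟩` up to
normalization, and Hölder reduces the estimate to an `L⁴` bound for `E g`. Since `(E g)²` is the
Fourier transform of the self-convolution of `g` along the parabola, Parseval and Cauchy–Schwarz
bound `‖E g‖₄⁴` by `‖g‖₂⁴` times the largest number of representations
`c = (t, t²) + (t', t'²)`. That number is multiplicative in `N` by the Chinese remainder theorem
and is at most `2` modulo a prime, where it counts roots of a quadratic; hence it is at most
`2 ^ ω(N)` for squarefree `N`.
-/

open Finset

section ParabolaReps

variable {R : Type*} [CommRing R] [Fintype R] [DecidableEq R]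

/-- `t ∈ parabolaReps c` iff `c = (t, t²) + (c.1 - t, (c.1 - t)²)`. -/
def parabolaReps (c : R × R) : Finset R :=
  univ.filter fun t => t ^ 2 + (c.1 - t) ^ 2 = c.2

lemma sum_sum_parabolaReps {M : Type*} [AddCommMonoid M] (φ : R → R → M) :
    ∑ c : R × R, ∑ t ∈ parabolaReps c, φ t (c.1 - t) = ∑ a, ∑ b, φ a b := by
  simp only [parabolaReps, Finset.sum_filter, Fintype.sum_prod_type]
  rw [Finset.sum_congr rfl fun s _ => Finset.sum_comm]
  simp only [Fintype.sum_ite_eq]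
  rw [Finset.sum_comm]
  exact Finset.sum_congr rfl fun a _ => Fintype.sum_equiv (Equiv.subRight a) _ _ fun _ => rfl

lemma card_parabolaReps_le_two {F : Type*} [Field F] [Fintype F] [DecidableEq F]
    (h2 : (2 : F) ≠ 0) (c : F × F) : #(parabolaReps c) ≤ 2 := by
  open Polynomial in
  set P : F[X] := C 2 * X ^ 2 + C (-2 * c.1) * X + C (c.1 ^ 2 - c.2)
  have hP : P ≠ 0 := Polynomial.ne_zero_of_degree_gt (n := 0) <| by
    rw [Polynomial.degree_quadratic h2]; norm_num
  calc #(parabolaReps c) ≤ #P.roots.toFinset := by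
        refine Finset.card_le_card fun t ht => ?_
        rw [parabolaReps, Finset.mem_filter] at ht
        rw [Multiset.mem_toFinset, Polynomial.mem_roots hP, Polynomial.IsRoot.def]
        simp only [P, Polynomial.eval_add, Polynomial.eval_mul, Polynomial.eval_C,
          Polynomial.eval_pow, Polynomial.eval_X]
        linear_combination ht.2
    _ ≤ P.natDegree := (Multiset.toFinset_card_le _).trans (Polynomial.card_roots' P)
    _ ≤ 2 := Polynomial.natDegree_quadratic_le

lemma card_parabolaReps_zmod_prime_le_two {p : ℕ} [Fact p.Prime] (c : ZMod p × ZMod p) :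
    #(parabolaReps c) ≤ 2 := by
  rcases eq_or_ne p 2 with rfl | hp
  · exact (Finset.card_le_univ _).trans (by simp)
  · exact card_parabolaReps_le_two (Ring.two_ne_zero (by rwa [ZMod.ringChar_zmod_n])) c

lemma card_parabolaReps_le_mul {A B : Type*} [CommRing A] [Fintype A] [DecidableEq A]
    [CommRing B] [Fintype B] [DecidableEq B] (e : R ≃+* A × B) (c : R × R) :
    #(parabolaReps c) ≤
      #(parabolaReps ((e c.1).1, (e c.2).1)) * #(parabolaReps ((e c.1).2, (e c.2).2)) := by
  rw [← Finset.card_product]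
  refine Finset.card_le_card_of_injOn (fun t => e t) (fun t ht => ?_) e.injective.injOn
  simp only [parabolaReps, Finset.coe_filter, Finset.mem_univ, true_and, Set.mem_ofPred_eq] at ht
  have := congrArg e ht
  simp only [map_add, map_sub, map_pow, Prod.ext_iff, Prod.fst_add, Prod.snd_add, Prod.fst_sub,
    Prod.snd_sub, Prod.pow_fst, Prod.pow_snd] at this
  simpa [parabolaReps] using this

lemma card_parabolaReps_zmod_le_two_pow (N : ℕ) [NeZero N] (hN : Squarefree N)
    (c : ZMod N × ZMod N) : #(parabolaReps c) ≤ 2 ^ #N.primeFactors := by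
  revert ‹NeZero N› hN c
  induction N using Nat.recOnPosPrimePosCoprime with
  | zero => intro _ hN; exact absurd hN not_squarefree_zero
  | one => intro _ _ c; exact (Finset.card_le_univ _).trans (by simp)
  | prime_pow p n hp hn =>
    intro _ hN c
    have hn1 : n = 1 := by
      by_contra h
      exact absurd hN (by rw [Nat.squarefree_pow_iff hp.ne_one hn.ne']; omega)
    subst hn1
    have : Fact (p ^ 1).Prime := ⟨by rwa [pow_one]⟩
    simpa [hp.primeFactors] using card_parabolaReps_zmod_prime_le_two c
  | coprime a b ha hb hab iha ihb =>
    intro _ hN c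
    obtain ⟨-, hsa, hsb⟩ := Nat.squarefree_mul_iff.mp hN
    have : NeZero a := ⟨by omega⟩
    have : NeZero b := ⟨by omega⟩
    calc #(parabolaReps c) ≤ _ := card_parabolaReps_le_mul (ZMod.chineseRemainder hab) c
      _ ≤ 2 ^ #a.primeFactors * 2 ^ #b.primeFactors := Nat.mul_le_mul (iha hsa _) (ihb hsb _)
      _ = 2 ^ #(a * b).primeFactors := by
        rw [hab.primeFactors_mul, Finset.card_union_of_disjoint hab.disjoint_primeFactors, pow_add]

end ParabolaReps

section Fourier

variable {R : Type*} [CommRing R] [Fintype R] {ψ : AddChar R ℂ}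

variable (ψ) in
noncomputable def fourierSum (f : R × R → ℂ) (m : R × R) : ℂ :=
  ∑ x, f x * ψ (-(x.1 * m.1 + x.2 * m.2))

lemma sum_addChar_dot [DecidableEq R] (hψ : ψ.IsPrimitive) (c : R × R) :
    ∑ x : R × R, ψ (x.1 * c.1 + x.2 * c.2) = if c = 0 then (Fintype.card R : ℂ) ^ 2 else 0 := by
  simp only [Fintype.sum_prod_type, AddChar.map_add_eq_mul, ← Finset.mul_sum, ← Finset.sum_mul,
    AddChar.sum_mulShift _ hψ, Prod.ext_iff, Prod.fst_zero, Prod.snd_zero]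
  split_ifs <;> simp_all [sq]

lemma sum_norm_sq_fourierSum (hψ : ψ.IsPrimitive) (h : R × R → ℂ) :
    ∑ m, ‖fourierSum ψ h m‖ ^ 2 = (Fintype.card R : ℝ) ^ 2 * ∑ x, ‖h x‖ ^ 2 := by
  classical
  have expand : ∀ m, fourierSum ψ h m * (starRingEnd ℂ) (fourierSum ψ h m) =
      ∑ x, ∑ y, h x * (starRingEnd ℂ) (h y) * ψ (m.1 * (y - x).1 + m.2 * (y - x).2) := by
    intro m
    rw [fourierSum, map_sum, Finset.sum_mul_sum]
    refine Finset.sum_congr rfl fun x _ => Finset.sum_congr rfl fun y _ => ?_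
    rw [map_mul, ← AddChar.map_neg_eq_conj, neg_neg, mul_mul_mul_comm, ← AddChar.map_add_eq_mul,
      Prod.fst_sub, Prod.snd_sub]
    ring_nf
  apply Complex.ofReal_injective
  push_cast
  simp only [← Complex.mul_conj', expand]
  rw [Finset.sum_comm, Finset.mul_sum]
  refine Finset.sum_congr rfl fun x _ => ?_
  simp only [Finset.sum_comm (γ := R × R), ← Finset.mul_sum, sum_addChar_dot hψ, sub_eq_zero,
    mul_ite, mul_zero, Fintype.sum_ite_eq']
  ring

variable (ψ) in
noncomputable def parabolaExt (g : R → ℂ) (x : R × R) : ℂ :=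
  ∑ t, g t * ψ (-(x.1 * t + x.2 * t ^ 2))

lemma sum_mul_parabolaExt (f : R × R → ℂ) (g : R → ℂ) :
    ∑ x, f x * parabolaExt ψ g x = ∑ t, g t * fourierSum ψ f (t, t ^ 2) := by
  simp only [parabolaExt, fourierSum, Finset.mul_sum]
  rw [Finset.sum_comm]
  exact Finset.sum_congr rfl fun t _ => Finset.sum_congr rfl fun x _ => by ring

variable [DecidableEq R]

noncomputable def parabolaSelfConv (g : R → ℂ) (c : R × R) : ℂ :=
  ∑ t ∈ parabolaReps c, g t * g (c.1 - t)

lemma parabolaExt_sq (g : R → ℂ) (x : R × R) :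
    parabolaExt ψ g x ^ 2 = fourierSum ψ (parabolaSelfConv g) x := by
  have on_reps : ∀ c, parabolaSelfConv g c * ψ (-(c.1 * x.1 + c.2 * x.2)) =
      ∑ t ∈ parabolaReps c, g t * g (c.1 - t) *
        ψ (-(x.1 * (t + (c.1 - t)) + x.2 * (t ^ 2 + (c.1 - t) ^ 2))) := by
    intro c
    rw [parabolaSelfConv, Finset.sum_mul]
    refine Finset.sum_congr rfl fun t ht => ?_
    rw [(Finset.mem_filter.mp ht).2]
    ring_nf
  rw [fourierSum, Finset.sum_congr rfl fun c _ => on_reps c,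
    sum_sum_parabolaReps (fun a b => g a * g b * ψ (-(x.1 * (a + b) + x.2 * (a ^ 2 + b ^ 2)))),
    parabolaExt, sq, Finset.sum_mul_sum]
  refine Finset.sum_congr rfl fun a _ => Finset.sum_congr rfl fun b _ => ?_
  rw [mul_mul_mul_comm, ← AddChar.map_add_eq_mul]
  ring_nf

lemma norm_parabolaSelfConv_sq_le (g : R → ℂ) (c : R × R) :
    ‖parabolaSelfConv g c‖ ^ 2 ≤
      #(parabolaReps c) * ∑ t ∈ parabolaReps c, ‖g t‖ ^ 2 * ‖g (c.1 - t)‖ ^ 2 :=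
  calc ‖parabolaSelfConv g c‖ ^ 2 ≤ (∑ t ∈ parabolaReps c, ‖g t * g (c.1 - t)‖) ^ 2 :=
        pow_le_pow_left₀ (norm_nonneg _) (norm_sum_le _ _) 2
    _ ≤ #(parabolaReps c) * ∑ t ∈ parabolaReps c, ‖g t * g (c.1 - t)‖ ^ 2 :=
        sq_sum_le_card_mul_sum_sq
    _ = _ := by simp only [norm_mul, mul_pow]

lemma sum_norm_parabolaExt_pow_four_le (hψ : ψ.IsPrimitive) {B : ℝ}
    (hB : ∀ c : R × R, (#(parabolaReps c) : ℝ) ≤ B) (g : R → ℂ) :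
    ∑ x, ‖parabolaExt ψ g x‖ ^ 4 ≤ (Fintype.card R : ℝ) ^ 2 * B * (∑ t, ‖g t‖ ^ 2) ^ 2 :=
  calc ∑ x, ‖parabolaExt ψ g x‖ ^ 4 = ∑ x, ‖fourierSum ψ (parabolaSelfConv g) x‖ ^ 2 := by
        simp only [← parabolaExt_sq, norm_pow, ← pow_mul]
    _ = (Fintype.card R : ℝ) ^ 2 * ∑ c, ‖parabolaSelfConv g c‖ ^ 2 := sum_norm_sq_fourierSum hψ _
    _ ≤ (Fintype.card R : ℝ) ^ 2 *
          ∑ c : R × R, B * ∑ t ∈ parabolaReps c, ‖g t‖ ^ 2 * ‖g (c.1 - t)‖ ^ 2 := by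
        gcongr with c
        exact (norm_parabolaSelfConv_sq_le g c).trans <| mul_le_mul_of_nonneg_right (hB c) <|
          Finset.sum_nonneg fun _ _ => by positivity
    _ = (Fintype.card R : ℝ) ^ 2 * B * (∑ t, ‖g t‖ ^ 2) ^ 2 := by
        rw [← Finset.mul_sum, sum_sum_parabolaReps (fun a b => ‖g a‖ ^ 2 * ‖g b‖ ^ 2),
          ← Finset.sum_mul_sum]
        ring

end Fourier

lemma norm_sum_mul_le_L43_mul_L4 {ι : Type*} (s : Finset ι) (u v : ι → ℂ) :
    ‖∑ i ∈ s, u i * v i‖ ≤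
      (∑ i ∈ s, ‖u i‖ ^ (4 / 3 : ℝ)) ^ (3 / 4 : ℝ) * (∑ i ∈ s, ‖v i‖ ^ 4) ^ (1 / 4 : ℝ) := by
  have holder := Real.inner_le_Lp_mul_Lq s (fun i => ‖u i‖) (fun i => ‖v i‖)
    (Real.holderConjugate_iff.mpr ⟨by norm_num, by norm_num⟩ : (4 / 3 : ℝ).HolderConjugate 4)
  norm_num at holder
  exact (norm_sum_le _ _).trans (by simpa only [norm_mul] using holder)

lemma rpow_half_le_of_le_mul_rpow_quarter {q S A B : ℝ} (hq : 0 < q) (hS : 0 ≤ S) (hA : 0 ≤ A)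
    (hB : 0 ≤ B) (h : S ≤ A * (q ^ 2 * B * S ^ 2) ^ (1 / 4 : ℝ)) :
    (q⁻¹ * (q⁻¹ ^ 2 * S)) ^ (1 / 2 : ℝ) ≤ B ^ (1 / 4 : ℝ) * q⁻¹ * A := by
  have quarter_mul_four : (1 / 4 : ℝ) * (4 : ℕ) = 1 := by norm_num
  have h4 : S ^ 2 * S ^ 2 ≤ S ^ 2 * (A ^ 4 * q ^ 2 * B) := by
    have := pow_le_pow_left₀ hS h 4
    rw [mul_pow, ← Real.rpow_mul_natCast (by positivity), quarter_mul_four, Real.rpow_one] at this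
    linear_combination this
  have hS2 : S ^ 2 ≤ A ^ 4 * q ^ 2 * B := by
    rcases hS.eq_or_lt with h0 | hS
    · rw [← h0, sq, zero_mul]; positivity
    · exact le_of_mul_le_mul_left h4 (by positivity)
  rw [← pow_le_pow_iff_left₀ (by positivity) (by positivity) four_ne_zero, mul_pow, mul_pow,
    ← Real.rpow_mul_natCast (by positivity), ← Real.rpow_mul_natCast hB, quarter_mul_four,
    Real.rpow_one, show (1 / 2 : ℝ) * (4 : ℕ) = (2 : ℕ) by norm_num, Real.rpow_natCast]
  calc (q⁻¹ * (q⁻¹ ^ 2 * S)) ^ 2 = q⁻¹ ^ 6 * S ^ 2 := by ring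
    _ ≤ q⁻¹ ^ 6 * (A ^ 4 * q ^ 2 * B) := by gcongr
    _ = B * q⁻¹ ^ 4 * A ^ 4 := by field_simp

theorem restriction_fourierSum_parabola {R : Type*} [CommRing R] [Fintype R] [DecidableEq R]
    {ψ : AddChar R ℂ} (hψ : ψ.IsPrimitive) {B : ℝ}
    (hB : ∀ c : R × R, (#(parabolaReps c) : ℝ) ≤ B) (f : R × R → ℂ) :
    ((Fintype.card R : ℝ)⁻¹ *
        ∑ t, ‖(Fintype.card R : ℂ)⁻¹ * fourierSum ψ f (t, t ^ 2)‖ ^ 2) ^ (1 / 2 : ℝ) ≤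
      B ^ (1 / 4 : ℝ) * (Fintype.card R : ℝ)⁻¹ *
        (∑ x, ‖f x‖ ^ (4 / 3 : ℝ)) ^ (3 / 4 : ℝ) := by
  set g : R → ℂ := fun t => (starRingEnd ℂ) (fourierSum ψ f (t, t ^ 2))
  set S := ∑ t, ‖fourierSum ψ f (t, t ^ 2)‖ ^ 2
  have hgS : ∑ t, ‖g t‖ ^ 2 = S := by simp only [g, S, Complex.norm_conj]
  have duality : (S : ℂ) = ∑ x, f x * parabolaExt ψ g x := by
    simp only [sum_mul_parabolaExt, g, S, Complex.ofReal_sum, Complex.ofReal_pow,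
      ← Complex.mul_conj', mul_comm]
  have hS : S ≤ (∑ x, ‖f x‖ ^ (4 / 3 : ℝ)) ^ (3 / 4 : ℝ) *
      ((Fintype.card R : ℝ) ^ 2 * B * S ^ 2) ^ (1 / 4 : ℝ) := by
    calc S = ‖(S : ℂ)‖ := by rw [Complex.norm_real, Real.norm_of_nonneg (by positivity)]
      _ ≤ _ := duality ▸ norm_sum_mul_le_L43_mul_L4 _ _ _
      _ ≤ _ := by
        gcongr
        exact hgS ▸ sum_norm_parabolaExt_pow_four_le hψ hB g
  simp only [norm_mul, norm_inv, Complex.norm_natCast, mul_pow, ← Finset.mul_sum]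
  exact rpow_half_le_of_le_mul_rpow_quarter (by positivity) (by positivity) (by positivity)
    ((Nat.cast_nonneg _).trans (hB 0)) hS

lemma dft_eq_inv_mul_fourierSum (N : ℕ) [NeZero N] (f : ZMod N × ZMod N → ℂ) (m : ZMod N × ZMod N) :
    dft N f m = (N : ℂ)⁻¹ * fourierSum ZMod.stdAddChar f m := by
  rw [dft, fourierSum]
  congr 1
  refine Finset.sum_congr rfl fun x _ => ?_
  rw [AddChar.map_neg_eq_inv, ZMod.stdAddChar_apply, ZMod.toCircle_apply, ← Complex.exp_neg]
  ring_nf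

lemma card_parabola (N : ℕ) [NeZero N] : #(parabola N) = N := by
  rw [parabola, Finset.card_image_of_injective _ fun _ _ h => congrArg Prod.fst h, Finset.card_univ,
    ZMod.card]

lemma sum_parabola {M : Type*} [AddCommMonoid M] (N : ℕ) [NeZero N] (φ : ZMod N × ZMod N → M) :
    ∑ m ∈ parabola N, φ m = ∑ t, φ (t, t ^ 2) :=
  Finset.sum_image fun _ _ _ _ h => congrArg Prod.fst h

theorem restriction_bounded_factors_general (K : ℕ) (N : ℕ) [NeZero N]
    (hN : Squarefree N) (hω : N.primeFactors.card ≤ K)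
    (f : ZMod N × ZMod N → ℂ) :
    (((parabola N).card : ℝ)⁻¹ *
        ∑ m ∈ parabola N, ‖dft N f m‖ ^ 2) ^ ((1 : ℝ) / 2) ≤
      (2 : ℝ) ^ ((K : ℝ) / 4) * (N : ℝ)⁻¹ *
        (∑ x : ZMod N × ZMod N, ‖f x‖ ^ ((4 : ℝ) / 3)) ^ ((3 : ℝ) / 4) := by
  have hB : ∀ c : ZMod N × ZMod N, (#(parabolaReps c) : ℝ) ≤ 2 ^ K := fun c => by
    exact_mod_cast (card_parabolaReps_zmod_le_two_pow N hN c).trans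
      (Nat.pow_le_pow_right two_pos hω)
  have key := restriction_fourierSum_parabola (ZMod.isPrimitive_stdAddChar N) hB f
  rw [ZMod.card, ← Real.rpow_natCast, ← Real.rpow_mul zero_le_two, mul_one_div] at key
  rw [card_parabola, sum_parabola]
  simpa only [dft_eq_inv_mul_fourierSum] using key

theorem restriction_bounded_factors (K : ℕ) (hK : 0 < K) (N : ℕ) [NeZero N]
    (hN : Squarefree N) (hω : N.primeFactors.card ≤ K)
    (f : ZMod N × ZMod N → ℂ) :
    (((parabola N).card : ℝ)⁻¹ *
        ∑ m ∈ parabola N, ‖dft N f m‖ ^ 2) ^ ((1 : ℝ) / 2) ≤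
      (2 : ℝ) ^ ((K : ℝ) / 4) * (N : ℝ)⁻¹ *
        (∑ x : ZMod N × ZMod N, ‖f x‖ ^ ((4 : ℝ) / 3)) ^ ((3 : ℝ) / 4) :=
  restriction_bounded_factors_general K N hN hω f
end

section
/- For every ε > 0 there exists a constant C_ε > 0 such that for every squarefree positive integer N and every function f : (ℤ/Nℤ)² → ℂ whose Fourier transform f̂ is supported in the parabola Σ = {(t, t²) : t ∈ ℤ/Nℤ}, one has ( (1/N²) · Σ_{x∈(ℤ/Nℤ)²} |f(x)|² )^{1/2} ≤ (C_ε · N^{ε})² · (1/N²) · Σ_{x∈(ℤ/Nℤ)²} |f(x)|. -/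
open scoped BigOperators

/-!
Write `g(t) = f̂(t, t²)`, so that `f(x) = N⁻¹ ∑ₜ g(t) e(x·(t, t²))` and `f(x)²` is an exponential
sum whose coefficient at `m` is the sum of `g(t) g(t')` over the representations
`m = (t, t²) + (t', t'²)`. Parseval turns `∑ |f|⁴` into the `ℓ²` norm of these coefficients, and
Cauchy–Schwarz in each fibre bounds it by the maximal number of representations times
`(∑ |g|²)² = (∑ |f|²)²`. A representation of `m` is determined by a root of `2(x - a)(x - b)` in
`ℤ/Nℤ`, and for squarefree `N` the Chinese remainder theorem gives at most `2^ω(N) ≪_ε N^ε` of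
them. Finally the log-convexity bound `(∑ |f|²)³ ≤ (∑ |f|)² ∑ |f|⁴` turns the `L⁴` estimate into
the `L²`–`L¹` estimate.
-/

open Finset

lemma sum_norm_sq_sum_fiber_le {T M : Type*} [Fintype T] [Fintype M] [DecidableEq M]
    (c : T → ℂ) (q : T → M) (K : ℕ) (hK : ∀ m, #{t | q t = m} ≤ K) :
    ∑ m, ‖∑ t with q t = m, c t‖ ^ 2 ≤ K * ∑ t, ‖c t‖ ^ 2 := by
  have hfiber (m : M) : ‖∑ t with q t = m, c t‖ ^ 2 ≤ K * ∑ t with q t = m, ‖c t‖ ^ 2 :=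
    calc ‖∑ t with q t = m, c t‖ ^ 2
        ≤ (∑ t with q t = m, ‖c t‖) ^ 2 := by gcongr; exact norm_sum_le _ _
      _ ≤ #{t | q t = m} * ∑ t with q t = m, ‖c t‖ ^ 2 := sq_sum_le_card_mul_sum_sq
      _ ≤ K * ∑ t with q t = m, ‖c t‖ ^ 2 := by gcongr; exact hK m
  calc ∑ m, ‖∑ t with q t = m, c t‖ ^ 2
      ≤ ∑ m, K * ∑ t with q t = m, ‖c t‖ ^ 2 := sum_le_sum fun m _ => hfiber m
    _ = K * ∑ t, ‖c t‖ ^ 2 := by rw [← mul_sum, sum_fiberwise]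

lemma sum_sq_pow_three_le {ι : Type*} (s : Finset ι) {a : ι → ℝ} (ha : ∀ i ∈ s, 0 ≤ a i) :
    (∑ i ∈ s, a i ^ 2) ^ 3 ≤ (∑ i ∈ s, a i) ^ 2 * ∑ i ∈ s, a i ^ 4 := by
  have h₁ : (∑ i ∈ s, a i ^ 2) ^ 2 ≤ (∑ i ∈ s, a i) * ∑ i ∈ s, a i ^ 3 :=
    sum_sq_le_sum_mul_sum_of_sq_le_mul s ha (fun i hi => pow_nonneg (ha i hi) 3)
      fun i _ => by ring_nf; rfl
  have h₂ : (∑ i ∈ s, a i ^ 3) ^ 2 ≤ (∑ i ∈ s, a i ^ 2) * ∑ i ∈ s, a i ^ 4 :=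
    sum_sq_le_sum_mul_sum_of_sq_le_mul s (fun i _ => sq_nonneg (a i))
      (fun i hi => pow_nonneg (ha i hi) 4) fun i _ => by ring_nf; rfl
  rcases (sum_nonneg fun i _ => sq_nonneg (a i) : 0 ≤ ∑ i ∈ s, a i ^ 2).eq_or_lt with h | h
  · rw [← h, zero_pow three_ne_zero]
    exact mul_nonneg (sq_nonneg _) (sum_nonneg fun i hi => pow_nonneg (ha i hi) 4)
  refine le_of_mul_le_mul_right ?_ h
  calc (∑ i ∈ s, a i ^ 2) ^ 3 * ∑ i ∈ s, a i ^ 2 = ((∑ i ∈ s, a i ^ 2) ^ 2) ^ 2 := by ring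
    _ ≤ ((∑ i ∈ s, a i) * ∑ i ∈ s, a i ^ 3) ^ 2 := by gcongr
    _ = (∑ i ∈ s, a i) ^ 2 * (∑ i ∈ s, a i ^ 3) ^ 2 := by ring
    _ ≤ (∑ i ∈ s, a i) ^ 2 * ((∑ i ∈ s, a i ^ 2) * ∑ i ∈ s, a i ^ 4) := by gcongr
    _ = (∑ i ∈ s, a i) ^ 2 * (∑ i ∈ s, a i ^ 4) * ∑ i ∈ s, a i ^ 2 := by ring

lemma sum_sq_le_mul_sq_sum_of_sum_pow_four_le {ι : Type*} (s : Finset ι) {a : ι → ℝ}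
    (ha : ∀ i ∈ s, 0 ≤ a i) {c : ℝ} (hc : 0 ≤ c)
    (h4 : ∑ i ∈ s, a i ^ 4 ≤ c * (∑ i ∈ s, a i ^ 2) ^ 2) :
    ∑ i ∈ s, a i ^ 2 ≤ c * (∑ i ∈ s, a i) ^ 2 := by
  rcases (sum_nonneg fun i _ => sq_nonneg (a i) : 0 ≤ ∑ i ∈ s, a i ^ 2).eq_or_lt with h | h
  · rw [← h]; positivity
  refine le_of_mul_le_mul_right ?_ (pow_pos h 2)
  calc (∑ i ∈ s, a i ^ 2) * (∑ i ∈ s, a i ^ 2) ^ 2 = (∑ i ∈ s, a i ^ 2) ^ 3 := by ring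
    _ ≤ (∑ i ∈ s, a i) ^ 2 * ∑ i ∈ s, a i ^ 4 := sum_sq_pow_three_le s ha
    _ ≤ (∑ i ∈ s, a i) ^ 2 * (c * (∑ i ∈ s, a i ^ 2) ^ 2) := by gcongr
    _ = c * (∑ i ∈ s, a i) ^ 2 * (∑ i ∈ s, a i ^ 2) ^ 2 := by ring

section FiniteRing

variable {S : Type*} [CommRing S] [Fintype S] [DecidableEq S] {ψ : AddChar S ℂ}

lemma sum_norm_sq_sum_mul_addChar (hψ : ψ.IsPrimitive) (h : S → ℂ) :
    ∑ x, ‖∑ m, h m * ψ (x * m)‖ ^ 2 = Fintype.card S * ∑ m, ‖h m‖ ^ 2 := by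
  have hψx (x m m' : S) : ψ (x * m) * starRingEnd ℂ (ψ (x * m')) = ψ (x * (m - m')) := by
    rw [← AddChar.map_neg_eq_conj, ← AddChar.map_add_eq_mul]; ring_nf
  apply Complex.ofReal_injective
  push_cast
  simp_rw [← Complex.mul_conj', map_sum, map_mul, sum_mul_sum, mul_mul_mul_comm _ (ψ _), hψx]
  rw [sum_comm, mul_sum]
  refine sum_congr rfl fun m _ => ?_
  rw [sum_comm]
  simp_rw [← mul_sum, AddChar.sum_mulShift _ hψ, sub_eq_zero, Nat.cast_ite, Nat.cast_zero,
    mul_ite, mul_zero, sum_ite_eq, if_pos (mem_univ m)]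
  ring

lemma sum_sum_mul_addChar_neg (hψ : ψ.IsPrimitive) (f : S → ℂ) (x : S) :
    ∑ m, (∑ y, f y * ψ (-(y * m))) * ψ (x * m) = Fintype.card S * f x := by
  have hψx (y m : S) : ψ (-(y * m)) * ψ (x * m) = ψ (m * (x - y)) := by
    rw [← AddChar.map_add_eq_mul]; ring_nf
  simp_rw [sum_mul, mul_assoc, hψx]
  rw [sum_comm]
  simp_rw [← mul_sum, AddChar.sum_mulShift _ hψ, sub_eq_zero, Nat.cast_ite, Nat.cast_zero,
    mul_ite, mul_zero, sum_ite_eq, if_pos (mem_univ x)]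
  ring

lemma sum_norm_sq_sum_mul_addChar_neg (hψ : ψ.IsPrimitive) (f : S → ℂ) :
    ∑ m, ‖∑ y, f y * ψ (-(y * m))‖ ^ 2 = Fintype.card S * ∑ y, ‖f y‖ ^ 2 := by
  rw [← sum_norm_sq_sum_mul_addChar hψ]
  exact Fintype.sum_equiv (Equiv.neg S) _ _ fun m => by simp [mul_comm]

lemma sum_mul_addChar_eq_sum_fiber {T : Type*} [Fintype T] (c : T → ℂ) (q : T → S) (x : S) :
    ∑ t, c t * ψ (x * q t) = ∑ m, (∑ t with q t = m, c t) * ψ (x * m) := by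
  simp_rw [sum_mul]
  rw [← sum_fiberwise univ q]
  refine sum_congr rfl fun m _ => sum_congr rfl fun t ht => ?_
  rw [(mem_filter.mp ht).2]

lemma sum_norm_pow_four_sum_mul_addChar_le (hψ : ψ.IsPrimitive) {T : Type*} [Fintype T]
    (g : T → ℂ) (q : T → S) (K : ℕ) (hK : ∀ m, #{p : T × T | q p.1 + q p.2 = m} ≤ K) :
    ∑ x, ‖∑ t, g t * ψ (x * q t)‖ ^ 4 ≤ Fintype.card S * K * (∑ t, ‖g t‖ ^ 2) ^ 2 := by
  have hsq (x : S) : (∑ t, g t * ψ (x * q t)) ^ 2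
      = ∑ p : T × T, g p.1 * g p.2 * ψ (x * (q p.1 + q p.2)) := by
    rw [sq, sum_mul_sum, ← univ_product_univ, sum_product]
    refine sum_congr rfl fun t _ => sum_congr rfl fun t' _ => ?_
    rw [mul_add, AddChar.map_add_eq_mul]; ring
  calc ∑ x, ‖∑ t, g t * ψ (x * q t)‖ ^ 4
      = ∑ x, ‖∑ m, (∑ p : T × T with q p.1 + q p.2 = m, g p.1 * g p.2) * ψ (x * m)‖ ^ 2 := by
        refine sum_congr rfl fun x _ => ?_
        rw [← sum_mul_addChar_eq_sum_fiber (fun p : T × T => g p.1 * g p.2), ← hsq, norm_pow]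
        ring
    _ = Fintype.card S * ∑ m, ‖∑ p : T × T with q p.1 + q p.2 = m, g p.1 * g p.2‖ ^ 2 :=
        sum_norm_sq_sum_mul_addChar hψ _
    _ ≤ Fintype.card S * (K * ∑ p : T × T, ‖g p.1 * g p.2‖ ^ 2) := by
        gcongr
        exact sum_norm_sq_sum_fiber_le _ (fun p : T × T => q p.1 + q p.2) K hK
    _ = Fintype.card S * K * (∑ t, ‖g t‖ ^ 2) ^ 2 := by
        simp_rw [norm_mul, mul_pow]
        rw [sq (∑ t, _), sum_mul_sum, ← univ_product_univ, sum_product, mul_assoc]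

end FiniteRing

namespace AddChar

variable {R R' : Type*} [CommRing R] [CommMonoid R']

/-- Multiplication in `R × R` is coordinatewise, so `ψ.dotProd (x * m) = ψ (x.1 * m.1 + x.2 * m.2)`
is `ψ` evaluated at the dot product. -/
def dotProd (ψ : AddChar R R') : AddChar (R × R) R' :=
  ψ.compAddMonoidHom ((AddMonoidHom.id R).coprod (AddMonoidHom.id R))

lemma dotProd_apply (ψ : AddChar R R') (x : R × R) : ψ.dotProd x = ψ (x.1 + x.2) := rfl

lemma IsPrimitive.dotProd {ψ : AddChar R R'} (hψ : ψ.IsPrimitive) : ψ.dotProd.IsPrimitive := by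
  intro b hb hb1
  have h₁ : mulShift ψ b.1 = 1 := by
    ext r; simpa [dotProd_apply] using DFunLike.congr_fun hb1 (r, 0)
  have h₂ : mulShift ψ b.2 = 1 := by
    ext r; simpa [dotProd_apply] using DFunLike.congr_fun hb1 (0, r)
  exact hb (Prod.ext (not_not.mp fun h => hψ h h₁) (not_not.mp fun h => hψ h h₂))

end AddChar

lemma exists_two_pow_card_primeFactors_le {δ : ℝ} (hδ : 0 < δ) :
    ∃ C > 0, ∀ n : ℕ, n ≠ 0 → (2 : ℝ) ^ #n.primeFactors ≤ C * (n : ℝ) ^ δ := by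
  set T := ⌈(2 : ℝ) ^ δ⁻¹⌉₊
  refine ⟨2 ^ T, by positivity, fun n hn => ?_⟩
  have hlarge {p : ℕ} (hp : T ≤ p) : (2 : ℝ) ≤ (p : ℝ) ^ δ :=
    calc (2 : ℝ) = ((2 : ℝ) ^ δ⁻¹) ^ δ := by
          rw [← Real.rpow_mul zero_le_two, inv_mul_cancel₀ hδ.ne', Real.rpow_one]
      _ ≤ (p : ℝ) ^ δ := by gcongr; exact (Nat.le_ceil _).trans (by exact_mod_cast hp)
  have hsmall : #{p ∈ n.primeFactors | p < T} ≤ T :=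
    (card_le_card fun p hp => mem_range.mpr (mem_filter.mp hp).2).trans (card_range T).le
  have hprod : ∏ p ∈ n.primeFactors, (p : ℝ) ≤ n := by
    rw [← Nat.cast_prod]
    exact_mod_cast Nat.le_of_dvd (Nat.pos_of_ne_zero hn) (Nat.prod_primeFactors_dvd n)
  calc (2 : ℝ) ^ #n.primeFactors
      = (∏ p ∈ n.primeFactors with p < T, 2) * ∏ p ∈ n.primeFactors with ¬p < T, (2 : ℝ) := by
        rw [prod_filter_mul_prod_filter_not, prod_const]
    _ ≤ 2 ^ T * ∏ p ∈ n.primeFactors with ¬p < T, (p : ℝ) ^ δ := by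
        rw [prod_const]
        gcongr with p hp
        · exact one_le_two
        · exact hlarge (not_lt.mp (mem_filter.mp hp).2)
    _ ≤ 2 ^ T * ∏ p ∈ n.primeFactors, (p : ℝ) ^ δ := by
        refine mul_le_mul_of_nonneg_left ?_ (by positivity)
        refine prod_le_prod_of_subset_of_one_le (filter_subset _ _) (fun p _ => by positivity)
          fun p hp _ => ?_
        exact Real.one_le_rpow (by exact_mod_cast (Nat.prime_of_mem_primeFactors hp).one_le) hδ.le
    _ ≤ 2 ^ T * (n : ℝ) ^ δ := by
        rw [Real.finsetProd_rpow _ _ fun p _ => Nat.cast_nonneg p]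
        gcongr

instance Nat.fact_prime_of_mem_primeFactors {N : ℕ} (p : N.primeFactors) : Fact (p : ℕ).Prime :=
  ⟨Nat.prime_of_mem_primeFactors p.2⟩

noncomputable def ZMod.equivPiPrimeFactors {N : ℕ} (hN : Squarefree N) :
    ZMod N ≃+* Π p : N.primeFactors, ZMod p :=
  (ZMod.ringEquivCongr
    ((prod_coe_sort N.primeFactors id).trans (Nat.prod_primeFactors_of_squarefree hN)).symm).trans
    (ZMod.prodEquivPi _ fun p q hpq =>
      (Nat.coprime_primes (Nat.prime_of_mem_primeFactors p.2)
        (Nat.prime_of_mem_primeFactors q.2)).mpr (Subtype.coe_ne_coe.mpr hpq))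

lemma card_filter_two_mul_sub_mul_sub_eq_zero_le_two {p : ℕ} [Fact p.Prime] (a b : ZMod p) :
    #{x | 2 * (x - a) * (x - b) = 0} ≤ 2 := by
  by_cases h2 : (2 : ZMod p) = 0
  · calc #{x | 2 * (x - a) * (x - b) = 0} ≤ Fintype.card (ZMod p) := card_filter_le _ _
      _ ≤ 2 := by
        rw [ZMod.card]
        exact Nat.le_of_dvd two_pos ((ZMod.natCast_eq_zero_iff 2 p).mp (by exact_mod_cast h2))
  · calc #{x | 2 * (x - a) * (x - b) = 0} ≤ #{a, b} := by
          refine card_le_card fun x hx => ?_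
          simp only [mem_filter, mem_univ, true_and, mul_eq_zero, h2, false_or, sub_eq_zero] at hx
          simpa using hx
      _ ≤ 2 := card_le_two

section SquarefreeModulus

variable {N : ℕ} [NeZero N]

lemma card_filter_two_mul_sub_mul_sub_eq_zero_le (hN : Squarefree N) (a b : ZMod N) :
    #{x | 2 * (x - a) * (x - b) = 0} ≤ 2 ^ #N.primeFactors := by
  set e := ZMod.equivPiPrimeFactors hN
  calc #{x | 2 * (x - a) * (x - b) = 0}
      ≤ #(Fintype.piFinset fun p : N.primeFactors =>
          {y : ZMod p | 2 * (y - e a p) * (y - e b p) = 0}) := by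
        refine card_le_card_of_injOn e (fun x hx => ?_) e.injective.injOn
        simp only [mem_coe, mem_filter, mem_univ, true_and, Fintype.mem_piFinset] at hx ⊢
        intro p
        simpa only [map_mul, map_sub, map_ofNat, map_zero, Pi.mul_apply, Pi.sub_apply,
          Pi.ofNat_apply, Pi.zero_apply] using congrArg (fun y => e y p) hx
    _ = ∏ p : N.primeFactors, #{y : ZMod p | 2 * (y - e a p) * (y - e b p) = 0} :=
        Fintype.card_piFinset _
    _ ≤ ∏ _p : N.primeFactors, 2 :=
        prod_le_prod' fun p _ => card_filter_two_mul_sub_mul_sub_eq_zero_le_two _ _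
    _ = 2 ^ #N.primeFactors := by simp

lemma card_filter_parabola_add_eq_le (hN : Squarefree N) (m : ZMod N × ZMod N) :
    #{p : ZMod N × ZMod N | (p.1, p.1 ^ 2) + (p.2, p.2 ^ 2) = m} ≤ 2 ^ #N.primeFactors := by
  rcases eq_empty_or_nonempty {p : ZMod N × ZMod N | (p.1, p.1 ^ 2) + (p.2, p.2 ^ 2) = m}
    with hempty | ⟨⟨a, b⟩, hab⟩
  · rw [hempty, card_empty]; exact Nat.zero_le _
  simp only [mem_filter, mem_univ, true_and, Prod.mk_add_mk, Prod.ext_iff] at hab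
  -- any other representation `(x, a + b - x)` of `m` satisfies `2 (x - a) (x - b) = 0`
  refine le_trans (card_le_card_of_injOn Prod.fst (fun p hp => ?_) fun p hp p' hp' h => ?_)
    (card_filter_two_mul_sub_mul_sub_eq_zero_le hN a b)
  · simp only [mem_coe, mem_filter, mem_univ, true_and, Prod.mk_add_mk, Prod.ext_iff] at hp ⊢
    linear_combination hp.2 - hab.2 + (p.1 - p.2 - a - b) * (hp.1 - hab.1)
  · simp only [mem_coe, mem_filter, mem_univ, true_and, Prod.mk_add_mk, Prod.ext_iff] at hp hp'
    refine Prod.ext h ?_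
    linear_combination hp.1 - hp'.1 - h

lemma card_zmod_prod : Fintype.card (ZMod N × ZMod N) = N ^ 2 := by
  simp [sq]

lemma dft_eq_sum_mul_dotProd (f : ZMod N × ZMod N → ℂ) (m : ZMod N × ZMod N) :
    dft N f m = (N : ℂ)⁻¹ * ∑ x, f x * ZMod.stdAddChar.dotProd (-(x * m)) := by
  have hexp (a : ZMod N) :
      Complex.exp (-2 * Real.pi * Complex.I * (a.val : ℂ) / N) = ZMod.stdAddChar (-a) := by
    rw [show -a = ((-(a.val : ℤ) : ℤ) : ZMod N) by simp, ZMod.stdAddChar_coe]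
    push_cast; ring_nf
  simp only [dft, AddChar.dotProd_apply, hexp]
  congr 2 with x
  simp only [Prod.fst_neg, Prod.snd_neg, Prod.fst_mul, Prod.snd_mul, neg_add]

lemma dft_inversion (f : ZMod N × ZMod N → ℂ) (x : ZMod N × ZMod N) :
    f x = (N : ℂ)⁻¹ * ∑ m, dft N f m * ZMod.stdAddChar.dotProd (x * m) := by
  simp_rw [dft_eq_sum_mul_dotProd, mul_assoc, ← mul_sum,
    sum_sum_mul_addChar_neg (ZMod.isPrimitive_stdAddChar N).dotProd, card_zmod_prod]
  field_simp [NeZero.ne N]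
  push_cast; ring

lemma sum_norm_dft_sq (f : ZMod N × ZMod N → ℂ) :
    ∑ m, ‖dft N f m‖ ^ 2 = ∑ x, ‖f x‖ ^ 2 := by
  simp_rw [dft_eq_sum_mul_dotProd, norm_mul, mul_pow, ← mul_sum,
    sum_norm_sq_sum_mul_addChar_neg (ZMod.isPrimitive_stdAddChar N).dotProd, card_zmod_prod]
  field_simp [NeZero.ne N]
  simp

lemma sum_eq_sum_parabola {M : Type*} [AddCommMonoid M] (F : ZMod N × ZMod N → M)
    (hF : ∀ m ∉ parabola N, F m = 0) : ∑ m, F m = ∑ t, F (t, t ^ 2) := by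
  rw [← sum_subset (subset_univ _) fun m _ hm => hF m hm, parabola,
    sum_image fun _ _ _ _ h => congrArg Prod.fst h]

section ParabolaSupport

variable {f : ZMod N × ZMod N → ℂ} (hf : ∀ m ∉ parabola N, dft N f m = 0)
include hf

lemma eq_sum_parabola (x : ZMod N × ZMod N) :
    f x = (N : ℂ)⁻¹ * ∑ t, dft N f (t, t ^ 2) * ZMod.stdAddChar.dotProd (x * (t, t ^ 2)) := by
  rw [dft_inversion f x, sum_eq_sum_parabola _ fun m hm => by rw [hf m hm, zero_mul]]

lemma sum_norm_sq_eq_sum_parabola :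
    ∑ x, ‖f x‖ ^ 2 = ∑ t, ‖dft N f (t, t ^ 2)‖ ^ 2 := by
  rw [← sum_norm_dft_sq, sum_eq_sum_parabola _ fun m hm => by simp [hf m hm]]

lemma sum_norm_pow_four_le (K : ℕ)
    (hK : ∀ m, #{p : ZMod N × ZMod N | (p.1, p.1 ^ 2) + (p.2, p.2 ^ 2) = m} ≤ K) :
    ∑ x, ‖f x‖ ^ 4 ≤ K / N ^ 2 * (∑ x, ‖f x‖ ^ 2) ^ 2 := by
  have hN : (0 : ℝ) < N := by exact_mod_cast (NeZero.pos N)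
  have key := sum_norm_pow_four_sum_mul_addChar_le (ZMod.isPrimitive_stdAddChar N).dotProd
    (fun t => dft N f (t, t ^ 2)) (fun t => (t, t ^ 2)) K hK
  rw [card_zmod_prod, ← sum_norm_sq_eq_sum_parabola hf] at key
  calc ∑ x, ‖f x‖ ^ 4
      = (N : ℝ)⁻¹ ^ 4 *
          ∑ x, ‖∑ t, dft N f (t, t ^ 2) * ZMod.stdAddChar.dotProd (x * (t, t ^ 2))‖ ^ 4 := by
        simp_rw [eq_sum_parabola hf, norm_mul, mul_pow, ← mul_sum, norm_inv, Complex.norm_natCast]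
    _ ≤ (N : ℝ)⁻¹ ^ 4 * (((N ^ 2 : ℕ) : ℝ) * K * (∑ x, ‖f x‖ ^ 2) ^ 2) := by gcongr
    _ = K / N ^ 2 * (∑ x, ‖f x‖ ^ 2) ^ 2 := by field_simp; push_cast; ring

theorem sum_norm_sq_le_of_dft_eq_zero_off_parabola (hN : Squarefree N) :
    ∑ x, ‖f x‖ ^ 2 ≤ 2 ^ #N.primeFactors / N ^ 2 * (∑ x, ‖f x‖) ^ 2 := by
  refine sum_sq_le_mul_sq_sum_of_sum_pow_four_le univ (fun x _ => norm_nonneg (f x))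
    (by positivity) ?_
  exact_mod_cast sum_norm_pow_four_le hf _ (card_filter_parabola_add_eq_le hN)

end ParabolaSupport

end SquarefreeModulus

theorem l2_l1_parabola (ε : ℝ) (hε : 0 < ε) :
    ∃ C : ℝ, 0 < C ∧ ∀ (N : ℕ) [NeZero N], Squarefree N →
      ∀ f : ZMod N × ZMod N → ℂ,
        (∀ m : ZMod N × ZMod N, m ∉ parabola N → dft N f m = 0) →
        (((N : ℝ) ^ 2)⁻¹ *
            ∑ x : ZMod N × ZMod N, ‖f x‖ ^ 2) ^ ((1 : ℝ) / 2) ≤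
          (C * (N : ℝ) ^ ε) ^ 2 * (((N : ℝ) ^ 2)⁻¹ *
            ∑ x : ZMod N × ZMod N, ‖f x‖) := by
  obtain ⟨C₀, hC₀, hbound⟩ := exists_two_pow_card_primeFactors_le (mul_pos four_pos hε)
  refine ⟨√√C₀, by positivity, fun N _ hN f hf => ?_⟩
  have hL1 : 0 ≤ ((N : ℝ) ^ 2)⁻¹ * ∑ x, ‖f x‖ := by positivity
  have hNε : (N : ℝ) ^ (4 * ε) = (((N : ℝ) ^ ε) ^ 2) ^ 2 := by
    rw [← pow_mul, mul_comm, Real.rpow_mul (Nat.cast_nonneg N)]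
    norm_cast
  rw [← Real.sqrt_eq_rpow]
  calc √(((N : ℝ) ^ 2)⁻¹ * ∑ x, ‖f x‖ ^ 2)
      ≤ √(((N : ℝ) ^ 2)⁻¹ * (2 ^ #N.primeFactors / N ^ 2 * (∑ x, ‖f x‖) ^ 2)) := by
        gcongr; exact sum_norm_sq_le_of_dft_eq_zero_off_parabola hf hN
    _ = √(2 ^ #N.primeFactors) * (((N : ℝ) ^ 2)⁻¹ * ∑ x, ‖f x‖) := by
        rw [← Real.sqrt_sq hL1, ← Real.sqrt_mul (by positivity)]
        congr 1; ring
    _ ≤ √(C₀ * (N : ℝ) ^ (4 * ε)) * (((N : ℝ) ^ 2)⁻¹ * ∑ x, ‖f x‖) := by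
        gcongr; exact hbound N (NeZero.ne N)
    _ = (√√C₀ * (N : ℝ) ^ ε) ^ 2 * (((N : ℝ) ^ 2)⁻¹ * ∑ x, ‖f x‖) := by
        rw [hNε, Real.sqrt_mul hC₀.le, Real.sqrt_sq (by positivity), mul_pow,
          Real.sq_sqrt (Real.sqrt_nonneg _)]
end
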